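/- arXiv:1609.04191 — 3 statements merged into one kernel-verified Lean document; each statement's English description precedes it below -/
import Mathlib

section
/- For k ≥ 2 define the (k-1)²×(k-1)² matrix H indexed by pairs (i,j), (i',j') with i,j,i',j' ∈ [k-1], where H encodes the quadratic form: for any k×k real matrix ε = (ε_{ij}) whose all row sums and column sums are zero, ∑_{i,j,i',j' ∈ [k-1]} H_{(i,j),(i',j')} ε_{ij} ε_{i'j'} = ∑_{i,j=1}^k ε_{ij}². Such a matrix H exists, is positive definite, and det H = k^{2(k-1)}. -/
/-!
Take `H = (1 + J) ⊗ₖ (1 + J)` with `J` the all-ones `(k-1)×(k-1)` matrix. If `ε` has vanishing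
row and column sums and top-left block `x`, its last column and row are minus the row and
column sums of `x` and its corner is the total sum of `x`, so `‖ε‖²` is `∑ x² + ∑ (row sums)² +
∑ (column sums)² + (total)²`; expanding `(1 + J) ⊗ₖ (1 + J)` into four Kronecker products gives
exactly these four terms. By the matrix determinant lemma `det (1 + J) = k`, and `1 + J` is
positive definite, hence so is `H`, with `det H = k^(k-1) · k^(k-1)`.
-/

open Finset Matrix Kronecker

section

variable {ι : Type*} [Fintype ι]

def completedNormSq (x : ι → ι → ℝ) : ℝ :=
  ∑ i, ∑ j, x i j ^ 2 + ∑ i, (∑ j, x i j) ^ 2 + ∑ j, (∑ i, x i j) ^ 2 + (∑ i, ∑ j, x i j) ^ 2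

lemma sum_sum_kronecker_one_add_vecMulVec_mul_mul [DecidableEq ι] (x : ι → ι → ℝ) :
    ∑ p : ι × ι, ∑ q : ι × ι,
        ((1 + vecMulVec 1 1 : Matrix ι ι ℝ) ⊗ₖ (1 + vecMulVec 1 1)) p q * x p.1 p.2 * x q.1 q.2 =
      completedNormSq x := by
  simp only [completedNormSq, Fintype.sum_prod_type, kroneckerMap_apply]
  simp only [vecMulVec_one, Matrix.add_apply, one_apply, replicateCol_apply, Pi.one_apply,
    mul_add, mul_ite, mul_one, mul_zero, add_mul, ite_mul, one_mul, zero_mul, sum_add_distrib,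
    sum_ite_eq, mem_univ, ↓reduceIte, sum_ite_irrel, sum_const_zero, sq, sum_mul_sum]
  rw [sum_comm (f := fun i j => ∑ i', x i j * x i' j)]
  ring_nf
  congr 1
  exact sum_congr rfl fun _ _ => sum_comm

lemma posDef_one_add_vecMulVec_one [DecidableEq ι] :
    (1 + vecMulVec 1 1 : Matrix ι ι ℝ).PosDef := by
  simpa using PosDef.one.add_posSemidef (posSemidef_vecMulVec_self_star (1 : ι → ℝ))

lemma det_one_add_vecMulVec_one [DecidableEq ι] :
    (1 + vecMulVec 1 1 : Matrix ι ι ℝ).det = Fintype.card ι + 1 := by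
  rw [vecMulVec_eq Unit, det_one_add_replicateCol_mul_replicateRow]
  simp [add_comm]

end

lemma sum_sq_eq_completedNormSq_castSucc {n : ℕ} {ε : Fin (n + 1) → Fin (n + 1) → ℝ}
    (hrow : ∀ i, ∑ j, ε i j = 0) (hcol : ∀ j, ∑ i, ε i j = 0) :
    ∑ i, ∑ j, ε i j ^ 2 = completedNormSq fun i j : Fin n => ε i.castSucc j.castSucc := by
  have hlastCol (i) : ε i (Fin.last n) = -∑ j : Fin n, ε i j.castSucc := by
    linarith [Fin.sum_univ_castSucc (ε i), hrow i]
  have hlastRow (j) : ε (Fin.last n) j = -∑ i : Fin n, ε i.castSucc j := by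
    linarith [Fin.sum_univ_castSucc (ε · j), hcol j]
  have hcorner :
      ε (Fin.last n) (Fin.last n) = ∑ i : Fin n, ∑ j : Fin n, ε i.castSucc j.castSucc := by
    rw [hlastCol]
    simp only [hlastRow, sum_neg_distrib, neg_neg]
    exact sum_comm
  simp only [Fin.sum_univ_castSucc, hcorner]
  simp only [hlastCol, hlastRow, neg_sq, completedNormSq, sum_add_distrib]
  ring

/-- There is a `(k-1)²×(k-1)²` matrix `H` encoding the quadratic form
`ε ↦ ∑_{ij} ε_{ij}²` on matrices with vanishing row and column sums (in the
coordinates given by the top-left `(k-1)×(k-1)` block); `H` is positive definite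
and `det H = k^{2(k-1)}`. -/
theorem stmt8 (k : ℕ) (hk : 2 ≤ k) :
    ∃ H : Matrix (Fin (k - 1) × Fin (k - 1)) (Fin (k - 1) × Fin (k - 1)) ℝ,
      (∀ ε : Fin k → Fin k → ℝ,
          (∀ i, ∑ j, ε i j = 0) → (∀ j, ∑ i, ε i j = 0) →
          ∑ p : Fin (k - 1) × Fin (k - 1), ∑ q : Fin (k - 1) × Fin (k - 1),
              H p q * ε (Fin.castLE (by omega) p.1) (Fin.castLE (by omega) p.2) *
                ε (Fin.castLE (by omega) q.1) (Fin.castLE (by omega) q.2) =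
            ∑ i, ∑ j, ε i j ^ 2) ∧
      H.PosDef ∧ H.det = (k : ℝ) ^ (2 * (k - 1)) := by
  obtain ⟨n, rfl⟩ : ∃ n, k = n + 1 := ⟨k - 1, by omega⟩
  refine ⟨(1 + vecMulVec 1 1) ⊗ₖ (1 + vecMulVec 1 1), fun ε hrow hcol => ?_,
    posDef_one_add_vecMulVec_one.kronecker posDef_one_add_vecMulVec_one, ?_⟩
  · rw [sum_sq_eq_completedNormSq_castSucc hrow hcol]
    exact sum_sum_kronecker_one_add_vecMulVec_mul_mul fun i j : Fin n => ε i.castSucc j.castSucc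
  · rw [det_kronecker, det_one_add_vecMulVec_one]
    simp only [add_tsub_cancel_right, Fintype.card_fin, Nat.cast_add, Nat.cast_one]
    ring
end

section
/- Let X be a nonnegative real random variable, F a sub-σ-algebra, and α > 0, and suppose Z is an integrable random variable. If X = |Z − E[Z|F]| · 1{|Z − E[Z|F]| > α c} for a constant c > 0, then E[X | F] ≤ 4 Var(Z | F)/(α c). -/
/-!
Pointwise, `|y| · 1{|y| > t} ≤ y² / t` for `t > 0`. Applying this to `y = Z - E[Z|F]` with
`t = α c` and taking conditional expectations gives `E[X|F] ≤ Var(Z|F) / (α c)`, and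
`Var(Z|F) = E[Z²|F] - E[Z|F]²` is nonnegative, so the constant `4` has room to spare.
-/

open MeasureTheory ProbabilityTheory

lemma ite_lt_abs_nonneg (t y : ℝ) : 0 ≤ if t < |y| then |y| else 0 := by
  split_ifs <;> simp

lemma ite_lt_abs_le_inv_mul_sq {t : ℝ} (ht : 0 < t) (y : ℝ) :
    (if t < |y| then |y| else 0) ≤ t⁻¹ * y ^ 2 := by
  split_ifs with h
  · rw [le_inv_mul_iff₀ ht, ← sq_abs, sq]
    exact mul_le_mul_of_nonneg_right h.le (abs_nonneg y)
  · positivity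

lemma condExp_ite_lt_abs_le_inv_smul_condExp_sq {Ω : Type*} {m m₀ : MeasurableSpace Ω}
    {μ : Measure[m₀] Ω} {Y : Ω → ℝ} (hY : AEStronglyMeasurable Y μ)
    (hY2 : Integrable (Y ^ 2) μ) {t : ℝ} (ht : 0 < t) :
    μ[fun ω => if t < |Y ω| then |Y ω| else 0 | m] ≤ᵐ[μ] t⁻¹ • μ[Y ^ 2 | m] := by
  have hle : ∀ ω, (if t < |Y ω| then |Y ω| else 0) ≤ (t⁻¹ • Y ^ 2) ω :=
    fun ω => ite_lt_abs_le_inv_mul_sq ht (Y ω)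
  have hmeas : AEStronglyMeasurable (fun ω => if t < |Y ω| then |Y ω| else 0) μ := by
    have : Measurable fun y : ℝ => if t < |y| then |y| else 0 :=
      Measurable.ite (measurableSet_lt measurable_const measurable_abs) measurable_abs
        measurable_const
    exact (this.comp_aemeasurable hY.aemeasurable).aestronglyMeasurable
  have hint : Integrable (fun ω => if t < |Y ω| then |Y ω| else 0) μ := by
    refine (hY2.smul t⁻¹).mono hmeas (.of_forall fun ω => ?_)
    rw [Real.norm_of_nonneg (ite_lt_abs_nonneg t (Y ω))]
    exact (hle ω).trans (Real.le_norm_self _)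
  filter_upwards [condExp_mono (m := m) hint (hY2.smul t⁻¹) (.of_forall hle),
    condExp_smul (m := m) t⁻¹ (Y ^ 2)] with ω hmono hsmul
  rwa [hsmul] at hmono

open MeasureTheory in
/-- Conditional layering/Chebyshev bound: if
`X = |Z − E[Z|F]| · 1{|Z − E[Z|F]| > α c}`, then `E[X|F] ≤ 4 Var(Z|F)/(α c)`. -/
theorem stmt10 {Ω : Type*} {m0 : MeasurableSpace Ω} (μ : Measure Ω)
    [IsProbabilityMeasure μ] (F : MeasurableSpace Ω) (hF : F ≤ m0)
    (Z : Ω → ℝ) (hZ : MemLp Z 2 μ) (α c : ℝ) (hα : 0 < α) (hc : 0 < c) :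
    ∀ᵐ ω ∂μ,
      (μ[fun ω' => if α * c < |Z ω' - (μ[Z|F]) ω'| then |Z ω' - (μ[Z|F]) ω'| else 0|F]) ω ≤
        4 * ((μ[fun ω' => Z ω' ^ 2|F]) ω - ((μ[Z|F]) ω) ^ 2) / (α * c) := by
  have hαc : 0 < α * c := mul_pos hα hc
  have hdev : MemLp (Z - μ[Z|F]) 2 μ := hZ.sub (hZ.condExp one_le_two)
  have hvar_nonneg : 0 ≤ᵐ[μ] Var[Z; μ | F] := condExp_nonneg (.of_forall fun ω => sq_nonneg _)
  filter_upwards [condExp_ite_lt_abs_le_inv_smul_condExp_sq (m := F) hdev.aestronglyMeasurable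
      hdev.integrable_sq hαc, condVar_ae_eq_condExp_sq_sub_sq_condExp hF hZ, hvar_nonneg]
    with ω hcheb hvar hnn
  change _ ≤ (α * c)⁻¹ * Var[Z; μ | F] ω at hcheb
  change Var[Z; μ | F] ω = μ[fun ω' => Z ω' ^ 2|F] ω - μ[Z|F] ω ^ 2 at hvar
  change 0 ≤ Var[Z; μ | F] ω at hnn
  simp only [Pi.sub_apply] at hcheb
  rw [hvar] at hcheb hnn
  rw [mul_div_assoc, div_eq_inv_mul]
  nlinarith [inv_pos.mpr hαc]
end

section
/- Let k ≥ 2 and d > 0 with d < (k-1)². Define f₂ on k×k probability matrices as f₂(ρ) = H(ρ) + (d/2) ln(1 − ‖ρ_{·⋆}‖₂² − ‖ρ_{⋆·}‖₂² + ‖ρ‖₂²). Then the second-order Taylor expansion of f₂ at the barycentre ρ̄ (all entries 1/k²) along directions ε with zero row and column sums reads f₂(ρ̄ + ε) = f₂(ρ̄) − (D/2) ‖ε‖₂² + O(‖ε‖₂³), where D = k²(1 − d/(k-1)²) > 0. -/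
/-!
Since `ε` has zero row and column sums, `ρ̄ + ε` has the same marginals as `ρ̄`, so the argument
of the logarithm in `f₂(ρ̄ + ε)` is exactly `(1 - 1/k)² + ‖ε‖₂²`, and the linear part of the
entropy, `∑ ε (log ρ̄ + 1)`, vanishes. What remains is the entrywise second-order Taylor expansion
of `t ↦ t log t` at `1/k²` (curvature `k²`) and the first-order expansion of `log` at
`(1 - 1/k)²` (slope `k²/(k-1)²`); their quadratic terms combine to `-(D/2)‖ε‖₂²`, and the
remainders are `O(‖ε‖₂³)` because `|ε_ij| ≤ ‖ε‖₂`.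
-/

open Finset Real

theorem abs_log_one_add_sub_le {u : ℝ} (hu : |u| ≤ 1 / 2) :
    |log (1 + u) - u| ≤ 2 * u ^ 2 := by
  have h := abs_log_sub_add_sum_range_le (x := -u) (by rw [abs_neg]; linarith) 1
  norm_num at h
  calc |log (1 + u) - u| = |-u + log (1 + u)| := by ring_nf
    _ ≤ u ^ 2 / (1 - |u|) := h
    _ ≤ 2 * u ^ 2 := by rw [div_le_iff₀ (by linarith)]; nlinarith [sq_nonneg u]

theorem abs_log_add_sub_log_sub_le {a s : ℝ} (ha : 0 < a) (hs : |s / a| ≤ 1 / 2) :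
    |log (a + s) - log a - s / a| ≤ 2 * (s / a) ^ 2 := by
  have hpos : 0 < 1 + s / a := by linarith [neg_abs_le (s / a)]
  rw [show a + s = a * (1 + s / a) by field_simp, log_mul ha.ne' hpos.ne', add_sub_cancel_left]
  exact abs_log_one_add_sub_le hs

theorem abs_log_one_add_sub_add_le {u : ℝ} (hu : |u| ≤ 1 / 2) :
    |log (1 + u) - u + u ^ 2 / 2| ≤ 2 * |u| ^ 3 := by
  have h := abs_log_sub_add_sum_range_le (x := -u) (by rw [abs_neg]; linarith) 2
  norm_num [sum_range_succ] at h
  calc |log (1 + u) - u + u ^ 2 / 2| = |-u + u ^ 2 / 2 + log (1 + u)| := by ring_nf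
    _ ≤ |u| ^ 3 / (1 - |u|) := h
    _ ≤ 2 * |u| ^ 3 := by
        rw [div_le_iff₀ (by linarith)]; nlinarith [pow_nonneg (abs_nonneg u) 3]

theorem abs_mul_log_add_sub_taylor_le {x t : ℝ} (hx : 0 < x) (ht : |t| ≤ x / 2) :
    |(x + t) * log (x + t) - x * log x - t * (log x + 1) - t ^ 2 / (2 * x)| ≤
      4 * |t| ^ 3 / x ^ 2 := by
  obtain ⟨u, rfl⟩ : ∃ u, t = x * u := ⟨t / x, by field_simp⟩
  rw [abs_mul, abs_of_pos hx] at ht ⊢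
  have hu : |u| ≤ 1 / 2 := by nlinarith
  have hpos : 0 < 1 + u := by linarith [neg_abs_le u]
  have h1u : |1 + u| ≤ 3 / 2 := by rw [abs_of_pos hpos]; linarith [le_abs_self u]
  calc |(x + x * u) * log (x + x * u) - x * log x - x * u * (log x + 1) - (x * u) ^ 2 / (2 * x)|
      = x * |(1 + u) * (log (1 + u) - u + u ^ 2 / 2) - u ^ 3 / 2| := by
        rw [← abs_of_pos hx, ← abs_mul, abs_of_pos hx, show x + x * u = x * (1 + u) by ring,
          log_mul hx.ne' hpos.ne']
        congr 1; field_simp; ring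
    _ ≤ x * (3 / 2 * (2 * |u| ^ 3) + |u| ^ 3 / 2) := by
        gcongr
        refine (abs_sub _ _).trans (add_le_add ?_ (by simp [abs_div, abs_pow]))
        rw [abs_mul]; gcongr; exact abs_log_one_add_sub_add_le hu
    _ ≤ 4 * (x * |u|) ^ 3 / x ^ 2 := by
        field_simp; nlinarith [pow_nonneg (abs_nonneg u) 3]

section Matrix

variable {m n : Type*} [Fintype m] [Fintype n]

noncomputable def entropy (ρ : m → n → ℝ) : ℝ :=
  -∑ i, ∑ j, ρ i j * log (ρ i j)

noncomputable def marginalDefect (ρ : m → n → ℝ) : ℝ :=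
  1 - ∑ i, (∑ j, ρ i j) ^ 2 - ∑ j, (∑ i, ρ i j) ^ 2 + ∑ i, ∑ j, ρ i j ^ 2

noncomputable def f₂ (d : ℝ) (ρ : m → n → ℝ) : ℝ :=
  entropy ρ + d / 2 * log (marginalDefect ρ)

theorem sq_le_sum_sum_sq (ε : m → n → ℝ) (i : m) (j : n) :
    ε i j ^ 2 ≤ ∑ i, ∑ j, ε i j ^ 2 :=
  (single_le_sum (fun j _ => sq_nonneg (ε i j)) (mem_univ j)).trans <|
    single_le_sum (f := fun i => ∑ j, ε i j ^ 2)
      (fun i _ => sum_nonneg fun j _ => sq_nonneg (ε i j)) (mem_univ i)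

theorem marginalDefect_const_add {ε : m → n → ℝ} (hrow : ∀ i, ∑ j, ε i j = 0)
    (hcol : ∀ j, ∑ i, ε i j = 0) (x : ℝ) :
    marginalDefect (fun i j => x + ε i j) =
      marginalDefect (fun (_ : m) (_ : n) => x) + ∑ i, ∑ j, ε i j ^ 2 := by
  have hsq : ∀ i, ∑ j, (x + ε i j) ^ 2 = ∑ _j : n, x ^ 2 + ∑ j, ε i j ^ 2 := fun i => by
    simp only [add_sq, sum_add_distrib, ← mul_sum, hrow, mul_zero, add_zero]
  simp only [marginalDefect, sum_add_distrib, hrow, hcol, add_zero, hsq]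
  ring

theorem abs_entropy_const_add_sub_le {ε : m → n → ℝ} (hrow : ∀ i, ∑ j, ε i j = 0)
    {x q : ℝ} (hx : 0 < x) (hε : ∀ i j, |ε i j| ≤ q) (hqx : q ≤ x / 2) :
    |entropy (fun i j => x + ε i j) - entropy (fun (_ : m) (_ : n) => x) +
        (∑ i, ∑ j, ε i j ^ 2) / (2 * x)| ≤ 4 * q * (∑ i, ∑ j, ε i j ^ 2) / x ^ 2 := by
  set g : ℝ → ℝ := fun t => (x + t) * log (x + t) - x * log x - t * (log x + 1) - t ^ 2 / (2 * x)
  have hlin : ∑ i, ∑ j, ε i j * (log x + 1) = 0 := by simp [← sum_mul, hrow]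
  have hsum : entropy (fun i j => x + ε i j) - entropy (fun (_ : m) (_ : n) => x) +
      (∑ i, ∑ j, ε i j ^ 2) / (2 * x) = -∑ i, ∑ j, g (ε i j) := by
    simp only [entropy, g, sum_sub_distrib, sum_div, hlin]
    ring
  have hg : ∀ i j, |g (ε i j)| ≤ 4 * q / x ^ 2 * ε i j ^ 2 := fun i j => calc
    |g (ε i j)| ≤ 4 * |ε i j| ^ 3 / x ^ 2 :=
      abs_mul_log_add_sub_taylor_le hx ((hε i j).trans hqx)
    _ = 4 * |ε i j| / x ^ 2 * ε i j ^ 2 := by rw [← sq_abs (ε i j)]; ring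
    _ ≤ 4 * q / x ^ 2 * ε i j ^ 2 := by gcongr; exact hε i j
  rw [hsum, abs_neg, mul_div_right_comm, mul_sum]
  refine (abs_sum_le_sum_abs _ _).trans (sum_le_sum fun i _ => ?_)
  rw [mul_sum]
  exact (abs_sum_le_sum_abs _ _).trans (sum_le_sum fun j _ => hg i j)

end Matrix

theorem marginalDefect_barycentre {k : ℕ} (hk : k ≠ 0) :
    marginalDefect (fun _ _ : Fin k => 1 / (k : ℝ) ^ 2) = (1 - 1 / k) ^ 2 := by
  simp only [marginalDefect, sum_const, card_univ, Fintype.card_fin, nsmul_eq_mul]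
  field_simp
  ring

theorem f₂_barycentre_add_sub {k : ℕ} (hk : 1 < k) (d : ℝ) {ε : Fin k → Fin k → ℝ}
    (hrow : ∀ i, ∑ j, ε i j = 0) (hcol : ∀ j, ∑ i, ε i j = 0) :
    f₂ d (fun i j => 1 / (k : ℝ) ^ 2 + ε i j) - f₂ d (fun _ _ : Fin k => 1 / (k : ℝ) ^ 2) +
        (k : ℝ) ^ 2 * (1 - d / ((k : ℝ) - 1) ^ 2) / 2 * ∑ i, ∑ j, ε i j ^ 2 =
      (entropy (fun i j => 1 / (k : ℝ) ^ 2 + ε i j) - entropy (fun _ _ : Fin k => 1 / (k : ℝ) ^ 2) +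
          (∑ i, ∑ j, ε i j ^ 2) / (2 * (1 / (k : ℝ) ^ 2))) +
        d / 2 * (log ((1 - 1 / (k : ℝ)) ^ 2 + ∑ i, ∑ j, ε i j ^ 2) - log ((1 - 1 / (k : ℝ)) ^ 2) -
          (∑ i, ∑ j, ε i j ^ 2) / (1 - 1 / (k : ℝ)) ^ 2) := by
  have hk1 : (1 : ℝ) < k := by exact_mod_cast hk
  rw [f₂, f₂, marginalDefect_const_add hrow hcol, marginalDefect_barycentre (by omega)]
  field_simp
  ring

theorem stmt15_general (k : ℕ) (hk : 2 ≤ k) (d : ℝ) :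
    ∃ C > (0 : ℝ), ∃ r > (0 : ℝ), ∀ ε : Fin k → Fin k → ℝ,
      (∀ i, ∑ j, ε i j = 0) → (∀ j, ∑ i, ε i j = 0) →
      Real.sqrt (∑ i, ∑ j, ε i j ^ 2) < r →
      |((-∑ i, ∑ j, (1 / (k : ℝ) ^ 2 + ε i j) * Real.log (1 / (k : ℝ) ^ 2 + ε i j)) +
            d / 2 * Real.log (1 - (∑ i, (∑ j, (1 / (k : ℝ) ^ 2 + ε i j)) ^ 2) -
              (∑ j, (∑ i, (1 / (k : ℝ) ^ 2 + ε i j)) ^ 2) +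
              ∑ i, ∑ j, (1 / (k : ℝ) ^ 2 + ε i j) ^ 2) -
          ((-∑ _i : Fin k, ∑ _j : Fin k, (1 / (k : ℝ) ^ 2) * Real.log (1 / (k : ℝ) ^ 2)) +
            d / 2 * Real.log (1 - (∑ _i : Fin k, (∑ _j : Fin k, (1 / (k : ℝ) ^ 2)) ^ 2) -
              (∑ _j : Fin k, (∑ _i : Fin k, (1 / (k : ℝ) ^ 2)) ^ 2) +
              ∑ _i : Fin k, ∑ _j : Fin k, (1 / (k : ℝ) ^ 2) ^ 2))) +
          (k : ℝ) ^ 2 * (1 - d / ((k : ℝ) - 1) ^ 2) / 2 * ∑ i, ∑ j, ε i j ^ 2| ≤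
        C * Real.sqrt (∑ i, ∑ j, ε i j ^ 2) ^ 3 := by
  have hk2 : (2 : ℝ) ≤ k := by exact_mod_cast hk
  refine ⟨4 * (k : ℝ) ^ 4 + 16 * |d|, by positivity, 1 / (2 * (k : ℝ) ^ 2), by positivity,
    fun ε hrow hcol hr => ?_⟩
  set x : ℝ := 1 / (k : ℝ) ^ 2 with hx_def
  set a : ℝ := (1 - 1 / (k : ℝ)) ^ 2 with ha_def
  set S := ∑ i, ∑ j, ε i j ^ 2
  set q := √S
  have hx : 0 < x := by positivity
  have hS : S = q ^ 2 := (sq_sqrt (by positivity)).symm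
  have hqx : q ≤ x / 2 := by rw [hx_def, div_div, mul_comm]; exact hr.le
  have hq0 : 0 ≤ q := sqrt_nonneg S
  have hq1 : q ≤ 1 / 8 := by
    rw [hx_def] at hqx; linarith [show 1 / (k : ℝ) ^ 2 ≤ 1 / 4 by gcongr; nlinarith]
  have ha : 1 / 4 ≤ a := by
    rw [ha_def]; nlinarith [show 1 / (k : ℝ) ≤ 1 / 2 by gcongr]
  have hSa : |S / a| ≤ 4 * q ^ 2 := by
    rw [abs_of_nonneg (by positivity), div_le_iff₀ (by positivity), hS]; nlinarith [sq_nonneg q]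
  have hent := abs_entropy_const_add_sub_le hrow hx
    (fun i j => abs_le_sqrt (sq_le_sum_sum_sq ε i j)) hqx
  have hlog := abs_log_add_sub_log_sub_le (s := S) (by positivity) (hSa.trans (by nlinarith))
  show |f₂ d (fun i j => x + ε i j) - f₂ d (fun _ _ => x) +
    (k : ℝ) ^ 2 * (1 - d / ((k : ℝ) - 1) ^ 2) / 2 * S| ≤ _
  rw [f₂_barycentre_add_sub hk d hrow hcol]
  calc _ ≤ 4 * q * S / x ^ 2 + |d| / 2 * (2 * (S / a) ^ 2) := by
        refine (abs_add_le _ _).trans (add_le_add hent ?_)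
        rw [abs_mul, abs_div, abs_two]; gcongr
    _ = 4 * (k : ℝ) ^ 4 * q ^ 3 + |d| * |S / a| ^ 2 := by
        rw [sq_abs, hx_def, hS]; field_simp
    _ ≤ 4 * (k : ℝ) ^ 4 * q ^ 3 + |d| * (4 * q ^ 2) ^ 2 := by gcongr
    _ ≤ (4 * (k : ℝ) ^ 4 + 16 * |d|) * q ^ 3 := by
        nlinarith [mul_nonneg (mul_nonneg (abs_nonneg d) (pow_nonneg hq0 3))
          (show 0 ≤ 1 - q by linarith)]

/-- Second-order Taylor expansion of `f₂` at the barycentre `ρ̄` along directions `ε`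
with vanishing row and column sums: `f₂(ρ̄+ε) = f₂(ρ̄) − (D/2)‖ε‖₂² + O(‖ε‖₂³)`
where `D = k²(1 − d/(k-1)²) > 0`. -/
theorem stmt15 (k : ℕ) (hk : 2 ≤ k) (d : ℝ) (hd0 : 0 < d)
    (hd : d < ((k : ℝ) - 1) ^ 2) :
    ∃ C > (0 : ℝ), ∃ r > (0 : ℝ), ∀ ε : Fin k → Fin k → ℝ,
      (∀ i, ∑ j, ε i j = 0) → (∀ j, ∑ i, ε i j = 0) →
      Real.sqrt (∑ i, ∑ j, ε i j ^ 2) < r →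
      |((-∑ i, ∑ j, (1 / (k : ℝ) ^ 2 + ε i j) * Real.log (1 / (k : ℝ) ^ 2 + ε i j)) +
            d / 2 * Real.log (1 - (∑ i, (∑ j, (1 / (k : ℝ) ^ 2 + ε i j)) ^ 2) -
              (∑ j, (∑ i, (1 / (k : ℝ) ^ 2 + ε i j)) ^ 2) +
              ∑ i, ∑ j, (1 / (k : ℝ) ^ 2 + ε i j) ^ 2) -
          ((-∑ _i : Fin k, ∑ _j : Fin k, (1 / (k : ℝ) ^ 2) * Real.log (1 / (k : ℝ) ^ 2)) +
            d / 2 * Real.log (1 - (∑ _i : Fin k, (∑ _j : Fin k, (1 / (k : ℝ) ^ 2)) ^ 2) -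
              (∑ _j : Fin k, (∑ _i : Fin k, (1 / (k : ℝ) ^ 2)) ^ 2) +
              ∑ _i : Fin k, ∑ _j : Fin k, (1 / (k : ℝ) ^ 2) ^ 2))) +
          (k : ℝ) ^ 2 * (1 - d / ((k : ℝ) - 1) ^ 2) / 2 * ∑ i, ∑ j, ε i j ^ 2| ≤
        C * Real.sqrt (∑ i, ∑ j, ε i j ^ 2) ^ 3 :=
  stmt15_general k hk d
end
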